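/- Let H be a finite-dimensional complex inner product space, let ψ_1, …, ψ_M ∈ H be unit vectors (M ≥ 1), let U and V be unitary operators on H, let c ∈ [0, 1], and let O : H →L[ℂ] H be a continuous linear operator. If |⟨U ψ_k, V ψ_k⟩| ≥ c for every k = 1, …, M, then (1/M) · Σ_{k=1}^{M} |⟨U ψ_k, O (U ψ_k)⟩ − ⟨V ψ_k, O (V ψ_k)⟩| ≤ ‖O‖ · 2·√(1 − c²). -/

import Mathlib

/-!
Write `t = ⟪x, y⟫` for unit vectors `x, y`. Splitting `y = t x + (y - t x)` and `x = t̄ y + (x - t̄ y)`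
gives `⟪x, O x⟫ - ⟪y, O y⟫ = ⟪x - t̄ y, O x⟫ - ⟪y, O (y - t x)⟫`, and both remainders have norm
`√(1 - |t|²)`. Hence each state drifts by at most `2 ‖O‖ √(1 - |t|²) ≤ 2 ‖O‖ √(1 - c²)`, and so does
the average.
-/

open scoped InnerProductSpace

section

variable {𝕜 E : Type*} [RCLike 𝕜] [NormedAddCommGroup E] [InnerProductSpace 𝕜 E]

theorem inner_map_self_sub_inner_map_self (O : E →L[𝕜] E) (x y : E) :
    ⟪x, O x⟫_𝕜 - ⟪y, O y⟫_𝕜 = ⟪x - ⟪y, x⟫_𝕜 • y, O x⟫_𝕜 - ⟪y, O (y - ⟪x, y⟫_𝕜 • x)⟫_𝕜 := by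
  simp only [inner_sub_left, inner_sub_right, inner_smul_left, inner_smul_right, map_sub,
    map_smul, inner_conj_symm]
  ring

theorem norm_sub_inner_smul_sq {x : E} (hx : ‖x‖ = 1) (y : E) :
    ‖y - ⟪x, y⟫_𝕜 • x‖ ^ 2 = ‖y‖ ^ 2 - ‖⟪x, y⟫_𝕜‖ ^ 2 := by
  have hre : RCLike.re ⟪y, ⟪x, y⟫_𝕜 • x⟫_𝕜 = ‖⟪x, y⟫_𝕜‖ ^ 2 := by
    rw [inner_smul_right, ← inner_conj_symm y x, RCLike.mul_conj, ← RCLike.ofReal_pow,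
      RCLike.ofReal_re]
  rw [@norm_sub_sq 𝕜, hre, norm_smul, hx]
  ring

theorem norm_sub_inner_smul {x : E} (hx : ‖x‖ = 1) {y : E} (hy : ‖y‖ = 1) :
    ‖y - ⟪x, y⟫_𝕜 • x‖ = √(1 - ‖⟪x, y⟫_𝕜‖ ^ 2) := by
  rw [← one_pow 2, ← hy, ← norm_sub_inner_smul_sq hx, Real.sqrt_sq (norm_nonneg _)]

theorem norm_inner_map_self_sub_inner_map_self_le (O : E →L[𝕜] E) {x y : E}
    (hx : ‖x‖ = 1) (hy : ‖y‖ = 1) :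
    ‖⟪x, O x⟫_𝕜 - ⟪y, O y⟫_𝕜‖ ≤ ‖O‖ * (2 * √(1 - ‖⟪x, y⟫_𝕜‖ ^ 2)) := by
  set u := x - ⟪y, x⟫_𝕜 • y
  set v := y - ⟪x, y⟫_𝕜 • x
  have hu : ‖u‖ = √(1 - ‖⟪x, y⟫_𝕜‖ ^ 2) := by
    rw [norm_sub_inner_smul hy hx, norm_inner_symm]
  have hv : ‖v‖ = √(1 - ‖⟪x, y⟫_𝕜‖ ^ 2) := norm_sub_inner_smul hx hy
  have hOx : ‖⟪u, O x⟫_𝕜‖ ≤ ‖u‖ * ‖O‖ :=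
    (norm_inner_le_norm _ _).trans <|
      mul_le_mul_of_nonneg_left (by simpa [hx] using O.le_opNorm x) (norm_nonneg _)
  have hOv : ‖⟪y, O v⟫_𝕜‖ ≤ ‖O‖ * ‖v‖ :=
    (norm_inner_le_norm _ _).trans <| by rw [hy, one_mul]; exact O.le_opNorm _
  calc ‖⟪x, O x⟫_𝕜 - ⟪y, O y⟫_𝕜‖ = ‖⟪u, O x⟫_𝕜 - ⟪y, O v⟫_𝕜‖ := by
        rw [inner_map_self_sub_inner_map_self]
    _ ≤ ‖⟪u, O x⟫_𝕜‖ + ‖⟪y, O v⟫_𝕜‖ := norm_sub_le _ _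
    _ ≤ ‖u‖ * ‖O‖ + ‖O‖ * ‖v‖ := add_le_add hOx hOv
    _ = ‖O‖ * (2 * √(1 - ‖⟪x, y⟫_𝕜‖ ^ 2)) := by rw [hu, hv]; ring

theorem norm_inner_map_self_sub_inner_map_self_le_of_le_norm_inner (O : E →L[𝕜] E) {x y : E}
    (hx : ‖x‖ = 1) (hy : ‖y‖ = 1) {c : ℝ} (hc : 0 ≤ c) (hxy : c ≤ ‖⟪x, y⟫_𝕜‖) :
    ‖⟪x, O x⟫_𝕜 - ⟪y, O y⟫_𝕜‖ ≤ ‖O‖ * (2 * √(1 - c ^ 2)) := by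
  refine (norm_inner_map_self_sub_inner_map_self_le O hx hy).trans ?_
  gcongr

end

theorem one_div_mul_sum_fin_le {n : ℕ} {f : Fin n → ℝ} {B : ℝ} (hB : 0 ≤ B)
    (hf : ∀ i, f i ≤ B) :
    (1 / (n : ℝ)) * ∑ i, f i ≤ B :=
  calc (1 / (n : ℝ)) * ∑ i, f i ≤ (1 / (n : ℝ)) * ∑ _i : Fin n, B := by
        gcongr with i; exact hf i
    _ = (n / n : ℝ) * B := by
        rw [Finset.sum_const, Finset.card_univ, Fintype.card_fin, nsmul_eq_mul]
        ring
    _ ≤ B := mul_le_of_le_one_left hB (div_self_le_one _)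

theorem average_task_deviation_bound_general
    {H : Type*} [NormedAddCommGroup H] [InnerProductSpace ℂ H]
    (M : ℕ)
    (ψ : Fin M → H) (hψ : ∀ k, ‖ψ k‖ = 1)
    (U V : H ≃ₗᵢ[ℂ] H)
    (c : ℝ) (hc0 : 0 ≤ c)
    (O : H →L[ℂ] H)
    (hover : ∀ k, c ≤ ‖⟪U (ψ k), V (ψ k)⟫_ℂ‖) :
    (1 / (M : ℝ)) * ∑ k : Fin M, ‖⟪U (ψ k), O (U (ψ k))⟫_ℂ - ⟪V (ψ k), O (V (ψ k))⟫_ℂ‖ ≤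
      ‖O‖ * (2 * Real.sqrt (1 - c ^ 2)) :=
  one_div_mul_sum_fin_le (by positivity) fun k =>
    norm_inner_map_self_sub_inner_map_self_le_of_le_norm_inner O
      (by rw [U.norm_map, hψ]) (by rw [V.norm_map, hψ]) hc0 (hover k)

/-- Average task deviation bound: if the outputs of unitaries `U, V` have
overlap at least `c` on every state of the task ensemble `{ψ_k}`, then the
average drift of any bounded observable over the ensemble is at most
`‖O‖ · 2√(1 − c²)`. -/
theorem average_task_deviation_bound
    {H : Type*} [NormedAddCommGroup H] [InnerProductSpace ℂ H]
    [FiniteDimensional ℂ H]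
    (M : ℕ) (hM : 1 ≤ M)
    (ψ : Fin M → H) (hψ : ∀ k, ‖ψ k‖ = 1)
    (U V : H ≃ₗᵢ[ℂ] H)
    (c : ℝ) (hc0 : 0 ≤ c) (hc1 : c ≤ 1)
    (O : H →L[ℂ] H)
    (hover : ∀ k, c ≤ ‖⟪U (ψ k), V (ψ k)⟫_ℂ‖) :
    (1 / (M : ℝ)) * ∑ k : Fin M, ‖⟪U (ψ k), O (U (ψ k))⟫_ℂ - ⟪V (ψ k), O (V (ψ k))⟫_ℂ‖ ≤
      ‖O‖ * (2 * Real.sqrt (1 - c ^ 2)) :=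
  average_task_deviation_bound_general M ψ hψ U V c hc0 O hover
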